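/- Equivalence of the MAC form and the min form (Appendix B): for a rate tuple (R1, ..., RK) and nonempty demand set D1 ⊆ [K], the following two conditions are equivalent: (i) there exists S with D1 ⊆ S ⊆ [K] such that for all T ⊆ S, R_T ≤ I(X_T; Y1 | X_{S\T}, Q); (ii) for every V ⊆ [K] with V ∩ D1 ≠ ∅, there exists V' ⊆ V with V' ∩ D1 = V ∩ D1 such that R_{V'} ≤ I(X_{V'}; Y1 | X_{[K]\V}, Q). -/

import Mathlib

/-!
Write `g B = H(Y1 | X_B, Q)`. Then `I(X_T; Y1 | X_A, Q) = g A - g (T ∪ A)`, and `g` is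
submodular: `B ↦ H(Y1, X_B, Q)` is submodular by Shannon's inequality, while `B ↦ H(X_B, Q)` is
modular since the `X_k` are conditionally independent given `Q`. Both forms now only involve `g`.
If `S` witnesses the MAC form, `V' = V ∩ S` works for `V`, by submodularity at `S` and `Vᶜ`.
Conversely, let `S ⊇ D1` minimise `g S + R_S`. For `T ⊆ S`, if `T` misses `D1` compare `S` with
`S \ T`; otherwise apply the min form to `V = T ∪ Sᶜ` and compare `S` with `V' ∪ (S \ T)`.
-/

open scoped BigOperators
open Filter

set_option synthInstance.maxSize 4000
set_option synthInstance.maxHeartbeats 1000000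
set_option maxHeartbeats 1000000

noncomputable section

/-- Shannon entropy (base 2) of a finitely supported distribution `p`. -/
def ent {α : Type*} [Fintype α] (p : α → ℝ) : ℝ := -∑ a, p a * Real.logb 2 (p a)

/-- The distribution (pushforward) of a random variable `f` on the finite
probability space `(Ω, p)`. -/
def distOf {Ω β : Type*} [Fintype Ω] [DecidableEq β] (p : Ω → ℝ) (f : Ω → β) : β → ℝ :=
  fun b => ∑ ω, if f ω = b then p ω else 0

/-- The entropy `H(f)` of a random variable `f` on the finite probability space `(Ω, p)`. -/
def entOf {Ω β : Type*} [Fintype Ω] [Fintype β] [DecidableEq β] (p : Ω → ℝ) (f : Ω → β) : ℝ :=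
  ent (distOf p f)

/-- The conditional entropy `H(f | g)`. -/
def condEnt {Ω β γ : Type*} [Fintype Ω] [Fintype β] [Fintype γ] [DecidableEq β] [DecidableEq γ]
    (p : Ω → ℝ) (f : Ω → β) (g : Ω → γ) : ℝ :=
  entOf p (fun ω => (f ω, g ω)) - entOf p g

/-- The mutual information `I(f; g)`. -/
def mutInfo {Ω β γ : Type*} [Fintype Ω] [Fintype β] [Fintype γ] [DecidableEq β] [DecidableEq γ]
    (p : Ω → ℝ) (f : Ω → β) (g : Ω → γ) : ℝ :=
  entOf p f + entOf p g - entOf p (fun ω => (f ω, g ω))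

/-- The conditional mutual information `I(f; g | h)`. -/
def condMutInfo {Ω β γ δ : Type*} [Fintype Ω] [Fintype β] [Fintype γ] [Fintype δ]
    [DecidableEq β] [DecidableEq γ] [DecidableEq δ]
    (p : Ω → ℝ) (f : Ω → β) (g : Ω → γ) (h : Ω → δ) : ℝ :=
  entOf p (fun ω => (f ω, h ω)) + entOf p (fun ω => (g ω, h ω)) -
    entOf p (fun ω => (f ω, g ω, h ω)) - entOf p h

/-- `p` is a probability mass function on the finite alphabet `α`. -/
def IsPMF {α : Type*} [Fintype α] (p : α → ℝ) : Prop := (∀ a, 0 ≤ p a) ∧ ∑ a, p a = 1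

/-- The number `2^{nR}` of messages at blocklength `n` and rate `R` (in bits). -/
def msgSize (n : ℕ) (R : ℝ) : ℕ := max 1 ⌊(2 : ℝ) ^ ((n : ℝ) * R)⌋₊

instance (n : ℕ) (R : ℝ) : NeZero (msgSize n R) :=
  ⟨by have h : 1 ≤ msgSize n R := le_max_left _ _; omega⟩

/-- The `ε`-typical set: `xs` is `ε`-typical for the pmf `p` if the empirical frequency of
every symbol `a` is within `ε · p a` of `p a`. -/
def Typical {α : Type*} [Fintype α] [DecidableEq α] (p : α → ℝ) (ε : ℝ) {n : ℕ}
    (xs : Fin n → α) : Prop :=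
  ∀ a, |((Finset.univ.filter fun i => xs i = a).card : ℝ) / (n : ℝ) - p a| ≤ ε * p a

section Entropy

variable {Ω β γ δ : Type*} [Fintype Ω] [DecidableEq β] [DecidableEq γ] [DecidableEq δ]
  (p : Ω → ℝ)

theorem sum_mul_comp_eq_sum_distOf [Fintype β] (f : Ω → β) (G : β → ℝ) :
    ∑ ω, p ω * G (f ω) = ∑ b, distOf p f b * G b := by
  simp only [distOf, Finset.sum_mul, ite_mul, zero_mul]
  rw [Finset.sum_comm]
  simp

theorem sum_distOf [Fintype β] (f : Ω → β) : ∑ b, distOf p f b = ∑ ω, p ω := by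
  simpa using (sum_mul_comp_eq_sum_distOf p f fun _ => 1).symm

theorem sum_distOf_prodMk_left [Fintype β] (f : Ω → β) (h : Ω → δ) (d : δ) :
    ∑ b, distOf p (fun ω => (f ω, h ω)) (b, d) = distOf p h d := by
  simp only [distOf, Prod.mk.injEq, ite_and]
  rw [Finset.sum_comm]
  simp

theorem le_distOf_apply_self (hp : ∀ ω, 0 ≤ p ω) (f : Ω → β) (ω : Ω) :
    p ω ≤ distOf p f (f ω) := by
  unfold distOf
  simpa using Finset.single_le_sum (f := fun ω' => if f ω' = f ω then p ω' else 0)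
    (fun ω' _ => by split_ifs <;> simp [hp]) (Finset.mem_univ ω)

theorem distOf_nonneg (hp : ∀ ω, 0 ≤ p ω) (f : Ω → β) (b : β) : 0 ≤ distOf p f b :=
  Finset.sum_nonneg fun ω _ => by split_ifs <;> simp [hp ω]

theorem distOf_apply_self_pos (hp : ∀ ω, 0 ≤ p ω) (f : Ω → β) (ω : Ω) (hω : 0 < p ω) :
    0 < distOf p f (f ω) :=
  hω.trans_le (le_distOf_apply_self p hp f ω)

theorem entOf_eq_neg_sum [Fintype β] (f : Ω → β) :
    entOf p f = -∑ ω, p ω * Real.logb 2 (distOf p f (f ω)) := by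
  rw [sum_mul_comp_eq_sum_distOf p f fun b => Real.logb 2 (distOf p f b)]
  rfl

theorem entOf_congr [Fintype β] [Fintype γ] {f : Ω → β} {g : Ω → γ}
    (h : ∀ ω ω', f ω = f ω' ↔ g ω = g ω') : entOf p f = entOf p g := by
  simp only [entOf_eq_neg_sum, distOf, h]

theorem condEnt_congr_right [Fintype β] [Fintype γ] [Fintype δ] (f : Ω → β) {g : Ω → γ}
    {g' : Ω → δ} (h : ∀ ω ω', g ω = g ω' ↔ g' ω = g' ω') :
    condEnt p f g = condEnt p f g' := by
  unfold condEnt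
  rw [entOf_congr p h, entOf_congr p (g := fun ω => (f ω, g' ω)) fun ω ω' => by
    simp only [Prod.mk.injEq, h]]

theorem condMutInfo_eq_condEnt_sub_condEnt [Fintype β] [Fintype γ] [Fintype δ]
    (f : Ω → β) (g : Ω → γ) (h : Ω → δ) :
    condMutInfo p f g h = condEnt p g h - condEnt p g (fun ω => (f ω, h ω)) := by
  have hswap : entOf p (fun ω => (f ω, g ω, h ω)) = entOf p (fun ω => (g ω, f ω, h ω)) :=
    entOf_congr p fun ω ω' => by simp only [Prod.mk.injEq]; tauto
  unfold condMutInfo condEnt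
  rw [hswap]
  ring

-- Gibbs' inequality, via `log x ≤ x - 1`.
theorem sum_mul_logb_nonpos {α : Type*} [Fintype α] {q r : α → ℝ} (hq : ∀ a, 0 ≤ q a)
    (hr : ∀ a, 0 < q a → 0 < r a) (hsum : ∑ a, q a * r a ≤ ∑ a, q a) :
    ∑ a, q a * Real.logb 2 (r a) ≤ 0 := by
  have hlog2 : 0 < Real.log 2 := Real.log_pos one_lt_two
  have hterm : ∀ a, q a * Real.logb 2 (r a) ≤ (q a * r a - q a) / Real.log 2 := by
    intro a
    rcases (hq a).eq_or_lt with h | h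
    · simp [← h]
    · rw [Real.logb, mul_div_assoc', div_le_div_iff_of_pos_right hlog2]
      nlinarith [Real.log_le_sub_one_of_pos (hr a h)]
  calc ∑ a, q a * Real.logb 2 (r a)
      ≤ ∑ a, (q a * r a - q a) / Real.log 2 := Finset.sum_le_sum fun a _ => hterm a
    _ = (∑ a, q a * r a - ∑ a, q a) / Real.log 2 := by
      rw [← Finset.sum_div, Finset.sum_sub_distrib]
    _ ≤ 0 := div_nonpos_of_nonpos_of_nonneg (by linarith) hlog2.le

theorem sum_mul_ratio_le_one [Fintype β] [Fintype γ] [Fintype δ] (hp : IsPMF p)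
    (f : Ω → β) (g : Ω → γ) (h : Ω → δ) :
    ∑ ω, p ω * (distOf p (fun ω => (f ω, h ω)) (f ω, h ω)
        * distOf p (fun ω => (g ω, h ω)) (g ω, h ω)
        / (distOf p (fun ω => (f ω, g ω, h ω)) (f ω, g ω, h ω) * distOf p h (h ω)))
      ≤ 1 := by
  rw [sum_mul_comp_eq_sum_distOf p (fun ω => (f ω, g ω, h ω)) fun z =>
    distOf p (fun ω => (f ω, h ω)) (z.1, z.2.2)
      * distOf p (fun ω => (g ω, h ω)) (z.2.1, z.2.2)
      / (distOf p (fun ω => (f ω, g ω, h ω)) z * distOf p h z.2.2)]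
  set P := distOf p (fun ω => (f ω, g ω, h ω))
  set Pfh := distOf p (fun ω => (f ω, h ω))
  set Pgh := distOf p (fun ω => (g ω, h ω))
  set Ph := distOf p h
  calc ∑ z, P z * (Pfh (z.1, z.2.2) * Pgh (z.2.1, z.2.2) / (P z * Ph z.2.2))
      ≤ ∑ z : β × γ × δ, Pfh (z.1, z.2.2) * Pgh (z.2.1, z.2.2) / Ph z.2.2 := by
        refine Finset.sum_le_sum fun z _ => ?_
        have hPz : 0 ≤ P z := distOf_nonneg p hp.1 _ z
        rcases hPz.eq_or_lt with hz | hz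
        · rw [← hz, zero_mul]
          exact div_nonneg (mul_nonneg (distOf_nonneg p hp.1 _ _) (distOf_nonneg p hp.1 _ _))
            (distOf_nonneg p hp.1 _ _)
        · rw [mul_div_assoc', mul_div_mul_left _ _ hz.ne']
    _ = ∑ d, (∑ b, Pfh (b, d)) * (∑ c, Pgh (c, d)) / Ph d := by
        simp only [Fintype.sum_prod_type, Finset.sum_mul_sum, Finset.sum_div]
        exact (Finset.sum_congr rfl fun b _ => Finset.sum_comm).trans Finset.sum_comm
    _ = ∑ d, Ph d := by
        simp only [Pfh, Pgh, Ph, sum_distOf_prodMk_left, mul_self_div_self]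
    _ = 1 := by rw [sum_distOf, hp.2]

/-- Shannon's inequality `I(f; g | h) ≥ 0`. -/
theorem entOf_submodular [Fintype β] [Fintype γ] [Fintype δ] (hp : IsPMF p)
    (f : Ω → β) (g : Ω → γ) (h : Ω → δ) :
    entOf p (fun ω => (f ω, g ω, h ω)) + entOf p h
      ≤ entOf p (fun ω => (f ω, h ω)) + entOf p (fun ω => (g ω, h ω)) := by
  have hfgh := distOf_apply_self_pos p hp.1 (fun ω => (f ω, g ω, h ω))
  have hfh := distOf_apply_self_pos p hp.1 (fun ω => (f ω, h ω))
  have hgh := distOf_apply_self_pos p hp.1 (fun ω => (g ω, h ω))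
  have hh := distOf_apply_self_pos p hp.1 h
  have hgibbs := sum_mul_logb_nonpos hp.1
    (fun ω hω => div_pos (mul_pos (hfh ω hω) (hgh ω hω)) (mul_pos (hfgh ω hω) (hh ω hω)))
    ((sum_mul_ratio_le_one p hp f g h).trans hp.2.ge)
  have hlog : ∀ ω, p ω * Real.logb 2 (distOf p (fun ω => (f ω, h ω)) (f ω, h ω)
        * distOf p (fun ω => (g ω, h ω)) (g ω, h ω)
        / (distOf p (fun ω => (f ω, g ω, h ω)) (f ω, g ω, h ω) * distOf p h (h ω)))
      = p ω * Real.logb 2 (distOf p (fun ω => (f ω, h ω)) (f ω, h ω))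
        + p ω * Real.logb 2 (distOf p (fun ω => (g ω, h ω)) (g ω, h ω))
        - p ω * Real.logb 2 (distOf p (fun ω => (f ω, g ω, h ω)) (f ω, g ω, h ω))
        - p ω * Real.logb 2 (distOf p h (h ω)) := by
    intro ω
    rcases (hp.1 ω).eq_or_lt with hω | hω
    · simp [← hω]
    · rw [Real.logb_div (mul_pos (hfh ω hω) (hgh ω hω)).ne'
          (mul_pos (hfgh ω hω) (hh ω hω)).ne',
        Real.logb_mul (hfh ω hω).ne' (hgh ω hω).ne',
        Real.logb_mul (hfgh ω hω).ne' (hh ω hω).ne']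
      ring
  simp only [hlog, Finset.sum_sub_distrib, Finset.sum_add_distrib] at hgibbs
  simp only [entOf_eq_neg_sum]
  linarith

end Entropy

section SetFunction

variable {ι : Type*} [Fintype ι] [DecidableEq ι] {g : Finset ι → ℝ} {R : ι → ℝ}
  {D : Finset ι}

theorem minForm_of_macForm (hg : ∀ s t, g (s ∪ t) + g (s ∩ t) ≤ g s + g t)
    (h : ∃ S, D ⊆ S ∧ ∀ T ⊆ S, ∑ k ∈ T, R k ≤ g (S \ T) - g S) :
    ∀ V : Finset ι, (V ∩ D).Nonempty →
      ∃ V' ⊆ V, V' ∩ D = V ∩ D ∧ ∑ k ∈ V', R k ≤ g Vᶜ - g (V' ∪ Vᶜ) := by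
  obtain ⟨S, hDS, hS⟩ := h
  intro V _
  refine ⟨V ∩ S, Finset.inter_subset_left,
    by rw [Finset.inter_assoc, Finset.inter_eq_right.2 hDS], ?_⟩
  have hbound := hS (V ∩ S) Finset.inter_subset_right
  rw [show S \ (V ∩ S) = S ∩ Vᶜ by ext; simp] at hbound
  rw [show V ∩ S ∪ Vᶜ = S ∪ Vᶜ by ext; simp; tauto]
  linarith [hg S Vᶜ]

theorem macForm_of_minForm
    (h : ∀ V : Finset ι, (V ∩ D).Nonempty →
      ∃ V' ⊆ V, V' ∩ D = V ∩ D ∧ ∑ k ∈ V', R k ≤ g Vᶜ - g (V' ∪ Vᶜ)) :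
    ∃ S, D ⊆ S ∧ ∀ T ⊆ S, ∑ k ∈ T, R k ≤ g (S \ T) - g S := by
  -- take `S ⊇ D` minimising `g S + R_S`
  obtain ⟨S, hDS, hmin⟩ := Finset.exists_min_image ({S | D ⊆ S} : Finset (Finset ι))
    (fun S => g S + ∑ k ∈ S, R k) ⟨Finset.univ, by simp⟩
  simp only [Finset.mem_filter, Finset.mem_univ, true_and] at hDS hmin
  refine ⟨S, hDS, fun T hTS => ?_⟩
  have hsplit := Finset.sum_sdiff hTS (f := R)
  by_cases hTD : (T ∩ D).Nonempty
  · obtain ⟨V', hV', hV'D, hbound⟩ :=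
      h (T ∪ Sᶜ) (hTD.mono (Finset.inter_subset_inter_right Finset.subset_union_left))
    rw [show (T ∪ Sᶜ)ᶜ = S \ T by ext; simp; tauto] at hbound
    have hdisj : Disjoint V' (S \ T) := Finset.disjoint_left.2 fun k hk hkST => by
      have := hV' hk
      simp only [Finset.mem_union, Finset.mem_compl, Finset.mem_sdiff] at this hkST
      tauto
    have hD : D ⊆ V' ∪ S \ T := fun k hk => by
      by_cases hkT : k ∈ T
      · have : k ∈ V' ∩ D := hV'D ▸ Finset.mem_inter.2 ⟨Finset.mem_union_left _ hkT, hk⟩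
        exact Finset.mem_union_left _ (Finset.mem_inter.1 this).1
      · exact Finset.mem_union_right _ (Finset.mem_sdiff.2 ⟨hDS hk, hkT⟩)
    linarith [Finset.sum_union hdisj (f := R) ▸ hmin _ hD]
  · have hD : D ⊆ S \ T := fun k hk =>
      Finset.mem_sdiff.2 ⟨hDS hk, fun hkT => hTD ⟨k, Finset.mem_inter.2 ⟨hkT, hk⟩⟩⟩
    linarith [hmin _ hD]

end SetFunction

theorem sum_ite_restrict_eq_prod {ι : Type*} [Fintype ι] [DecidableEq ι] {Z : ι → Type*}
    [∀ i, Fintype (Z i)] [∀ i, DecidableEq (Z i)] (u : ∀ i, Z i → ℝ)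
    (hu : ∀ i, ∑ z, u i z = 1) (B : Finset ι) (φ : ∀ i : {i // i ∈ B}, Z i) :
    ∑ x : ∀ i, Z i, (if (fun i : {i // i ∈ B} => x i) = φ then ∏ i, u i (x i) else 0)
      = ∏ i : {i // i ∈ B}, u i (φ i) := by
  -- the indicator of `x|_B = φ` is absorbed into the factors indexed by `B`
  set v : ∀ i, Z i → ℝ := fun i z =>
    if h : i ∈ B then (if z = φ ⟨i, h⟩ then u i z else 0) else u i z
  have hv : ∀ x : ∀ i, Z i,
      (if (fun i : {i // i ∈ B} => x i) = φ then ∏ i, u i (x i) else 0)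
        = ∏ i, v i (x i) := by
    intro x
    split_ifs with hx
    · refine Finset.prod_congr rfl fun i _ => ?_
      by_cases hi : i ∈ B <;> simp [v, hi, ← hx]
    · obtain ⟨⟨i, hi⟩, hxi⟩ := Function.ne_iff.1 hx
      exact (Finset.prod_eq_zero (Finset.mem_univ i) (by simp [v, hi, hxi])).symm
  have hsum : ∀ i, ∑ z, v i z = if h : i ∈ B then u i (φ ⟨i, h⟩) else 1 := by
    intro i
    by_cases hi : i ∈ B <;> simp [v, hi, hu]
  rw [Finset.sum_congr rfl fun x _ => hv x, ← Fintype.prod_sum, Fintype.prod_congr _ _ hsum,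
    Fintype.prod_dite]
  simp only [Finset.prod_const_one, mul_one]
  -- the two sides differ only in the `Fintype` instance on `{i // i ∈ B}`
  convert rfl

theorem restrict_eq_restrict_iff {ι : Type*} {Z : ι → Type*} {s : Finset ι}
    {x x' : ∀ i, Z i} :
    ((fun i : {i // i ∈ s} => x i) = fun i : {i // i ∈ s} => x' i) ↔
      ∀ i ∈ s, x i = x' i := by
  simp [funext_iff]

section SingleLetter

variable {K : ℕ} {Q Yo : Type*} {X : Fin K → Type*}
  [Fintype Q] [DecidableEq Q] [Fintype Yo] [DecidableEq Yo]
  [∀ k, Fintype (X k)] [∀ k, DecidableEq (X k)]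

variable (pQ : Q → ℝ) (pX : ∀ k, Q → X k → ℝ) (W : (∀ k, X k) → Yo → ℝ)

/-- The joint distribution of `(Q, X_{[K]}, Y1)` with
`p(q, x_{[K]}, y1) = p(q) p(x1|q) ⋯ p(xK|q) p(y1 | x_{[K]})`. -/
def SjointP : Q × (∀ k, X k) × Yo → ℝ := fun z =>
  pQ z.1 * (∏ k, pX k z.1 (z.2.1 k)) * W z.2.1 z.2.2

/-- A set `S ⊆ [K]` is *decodable* if `R_T ≤ I(X_T; Y1 | X_{S \ T}, Q)` for all `T ⊆ S`. -/
def IsDecodableSet (R : Fin K → ℝ) (S : Finset (Fin K)) : Prop :=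
  ∀ T ⊆ S, ∑ k ∈ T, R k ≤
    condMutInfo (SjointP pQ pX W)
      (fun z => fun k : {k // k ∈ T} => z.2.1 k.1)
      (fun z => z.2.2)
      (fun z => ((fun k : {k // k ∈ S \ T} => z.2.1 k.1), z.1))

end SingleLetter

section JointDistribution

variable {K : ℕ} {Q Yo : Type*} {X : Fin K → Type*} [Fintype Q] [Fintype Yo]
  [∀ k, Fintype (X k)] (pQ : Q → ℝ) (pX : ∀ k, Q → X k → ℝ) (W : (∀ k, X k) → Yo → ℝ)

-- `X_B`, `(X_B, Q)` and `(Y1, X_B, Q)` as functions on the sample space `Q × X_{[K]} × Y1`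
local notation "X[" B "]" => fun z => fun k : {k // k ∈ B} => Prod.fst (Prod.snd z) (Subtype.val k)
local notation "XQ[" B "]" => fun z => ((fun k : {k // k ∈ B} => Prod.fst (Prod.snd z) (Subtype.val k)), Prod.fst z)
local notation "YXQ[" B "]" => fun z => (Prod.snd (Prod.snd z), (fun k : {k // k ∈ B} => Prod.fst (Prod.snd z) (Subtype.val k)), Prod.fst z)

theorem SjointP_isPMF (hpQ : IsPMF pQ) (hpX : ∀ k q, IsPMF (pX k q)) (hW : ∀ x, IsPMF (W x)) :
    IsPMF (SjointP pQ pX W) := by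
  refine ⟨fun z => mul_nonneg (mul_nonneg (hpQ.1 _)
    (Finset.prod_nonneg fun k _ => (hpX k _).1 _)) ((hW _).1 _), ?_⟩
  simp only [SjointP, Fintype.sum_prod_type, ← Finset.mul_sum, (hW _).2, mul_one,
    ← Fintype.prod_sum, (hpX _ _).2, Finset.prod_const_one, hpQ.2]

variable [DecidableEq Q] [∀ k, DecidableEq (X k)]

theorem distOf_SjointP_restrict (hpX : ∀ k q, IsPMF (pX k q)) (hW : ∀ x, IsPMF (W x))
    (B : Finset (Fin K)) (φ : ∀ k : {k // k ∈ B}, X k) (q : Q) :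
    distOf (SjointP pQ pX W) XQ[B] (φ, q) = pQ q * ∏ k : {k // k ∈ B}, pX k q (φ k) := by
  have hy : ∀ (q' : Q) (x : ∀ k, X k),
      ∑ y, (if ((fun k : {k // k ∈ B} => x k.1), q') = (φ, q)
        then pQ q' * (∏ k, pX k q' (x k)) * W x y else 0)
      = if q' = q then
          pQ q * if (fun k : {k // k ∈ B} => x k.1) = φ then ∏ k, pX k q (x k) else 0
        else 0 := by
    intro q' x
    by_cases hq : q' = q <;> by_cases hx : (fun k : {k // k ∈ B} => x k.1) = φ <;>
      simp [hq, hx, ← Finset.mul_sum, (hW x).2]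
  simp only [distOf, SjointP, Fintype.sum_prod_type, hy, Finset.sum_ite_irrel,
    Finset.sum_const_zero, Finset.sum_ite_eq', Finset.mem_univ, if_true, ← Finset.mul_sum]
  rw [sum_ite_restrict_eq_prod _ fun k => (hpX k q).2]

theorem entOf_SjointP_restrict (hpX : ∀ k q, IsPMF (pX k q)) (hW : ∀ x, IsPMF (W x))
    (B : Finset (Fin K)) :
    entOf (SjointP pQ pX W) XQ[B]
      = -∑ z, SjointP pQ pX W z * Real.logb 2 (pQ z.1)
        + ∑ k ∈ B, -∑ z, SjointP pQ pX W z * Real.logb 2 (pX k z.1 (z.2.1 k)) := by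
  set p := SjointP pQ pX W with hp_def
  have hterm : ∀ z,
      p z * Real.logb 2 (distOf p XQ[B] ((fun k : {k // k ∈ B} => z.2.1 k.1), z.1))
      = p z * Real.logb 2 (pQ z.1) + ∑ k ∈ B, p z * Real.logb 2 (pX k z.1 (z.2.1 k)) := by
    intro z
    rw [hp_def, distOf_SjointP_restrict pQ pX W hpX hW, ← hp_def]
    by_cases hz : p z = 0
    · simp [hz]
    have hQ : pQ z.1 ≠ 0 := fun h => hz (by simp [p, SjointP, h])
    have hX : ∀ k, pX k z.1 (z.2.1 k) ≠ 0 := fun k h => hz (by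
      simp [p, SjointP,
        Finset.prod_eq_zero (Finset.mem_univ k) (f := fun k => pX k z.1 (z.2.1 k)) h])
    rw [Real.logb_mul hQ (Finset.prod_ne_zero_iff.2 fun k _ => hX k.1),
      Real.logb_prod _ _ fun k _ => hX k.1, mul_add, Finset.mul_sum,
      Finset.sum_coe_sort B fun k => p z * Real.logb 2 (pX k z.1 (z.2.1 k))]
  rw [entOf_eq_neg_sum]
  simp only [hterm, Finset.sum_add_distrib, Finset.sum_neg_distrib, neg_add]
  rw [Finset.sum_comm]

theorem entOf_SjointP_restrict_modular (hpX : ∀ k q, IsPMF (pX k q)) (hW : ∀ x, IsPMF (W x))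
    (s t : Finset (Fin K)) :
    entOf (SjointP pQ pX W) XQ[s ∪ t] + entOf (SjointP pQ pX W) XQ[s ∩ t]
      = entOf (SjointP pQ pX W) XQ[s] + entOf (SjointP pQ pX W) XQ[t] := by
  simp only [entOf_SjointP_restrict pQ pX W hpX hW]
  linarith [Finset.sum_union_inter (s₁ := s) (s₂ := t)
    (f := fun k => -∑ z, SjointP pQ pX W z * Real.logb 2 (pX k z.1 (z.2.1 k)))]

theorem condMutInfo_restrict_eq [DecidableEq Yo] (p : Q × (∀ k, X k) × Yo → ℝ)
    (T A : Finset (Fin K)) :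
    condMutInfo p X[T] (fun z => z.2.2) XQ[A]
      = condEnt p (fun z => z.2.2) XQ[A] - condEnt p (fun z => z.2.2) XQ[T ∪ A] := by
  rw [condMutInfo_eq_condEnt_sub_condEnt]
  congr 1
  exact condEnt_congr_right p _ fun z z' => by
    simp only [Prod.mk.injEq, restrict_eq_restrict_iff, Finset.forall_mem_union, and_assoc]

theorem entOf_restrict_submodular [DecidableEq Yo] {p : Q × (∀ k, X k) × Yo → ℝ}
    (hp : IsPMF p) (s t : Finset (Fin K)) :
    entOf p YXQ[s ∪ t] + entOf p YXQ[s ∩ t] ≤ entOf p YXQ[s] + entOf p YXQ[t] := by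
  have key := entOf_submodular p hp X[s] X[t] YXQ[s ∩ t]
  have hst : s ∩ t ⊆ s := Finset.inter_subset_left
  have hts : s ∩ t ⊆ t := Finset.inter_subset_right
  have hunion : entOf p (fun z => ((fun k : {k // k ∈ s} => z.2.1 k.1),
        (fun k : {k // k ∈ t} => z.2.1 k.1), z.2.2,
        (fun k : {k // k ∈ s ∩ t} => z.2.1 k.1), z.1))
      = entOf p YXQ[s ∪ t] := entOf_congr p fun z z' => by
    simp only [Prod.mk.injEq, restrict_eq_restrict_iff, Finset.forall_mem_union]
    grind
  have hleft : entOf p (fun z => ((fun k : {k // k ∈ s} => z.2.1 k.1), z.2.2,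
        (fun k : {k // k ∈ s ∩ t} => z.2.1 k.1), z.1)) = entOf p YXQ[s] :=
    entOf_congr p fun z z' => by
      simp only [Prod.mk.injEq, restrict_eq_restrict_iff]
      grind
  have hright : entOf p (fun z => ((fun k : {k // k ∈ t} => z.2.1 k.1), z.2.2,
        (fun k : {k // k ∈ s ∩ t} => z.2.1 k.1), z.1)) = entOf p YXQ[t] :=
    entOf_congr p fun z z' => by
      simp only [Prod.mk.injEq, restrict_eq_restrict_iff]
      grind
  rwa [hunion, hleft, hright] at key

theorem condEnt_SjointP_submodular [DecidableEq Yo] (hpQ : IsPMF pQ)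
    (hpX : ∀ k q, IsPMF (pX k q)) (hW : ∀ x, IsPMF (W x)) (s t : Finset (Fin K)) :
    condEnt (SjointP pQ pX W) (fun z => z.2.2) XQ[s ∪ t]
        + condEnt (SjointP pQ pX W) (fun z => z.2.2) XQ[s ∩ t]
      ≤ condEnt (SjointP pQ pX W) (fun z => z.2.2) XQ[s]
        + condEnt (SjointP pQ pX W) (fun z => z.2.2) XQ[t] := by
  unfold condEnt
  linarith [entOf_restrict_submodular (SjointP_isPMF pQ pX W hpQ hpX hW) s t,
    entOf_SjointP_restrict_modular pQ pX W hpX hW s t]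

end JointDistribution

section SingleLetter

variable {K : ℕ} {Q Yo : Type*} {X : Fin K → Type*}
  [Fintype Q] [DecidableEq Q] [Fintype Yo] [DecidableEq Yo]
  [∀ k, Fintype (X k)] [∀ k, DecidableEq (X k)]

variable (pQ : Q → ℝ) (pX : ∀ k, Q → X k → ℝ) (W : (∀ k, X k) → Yo → ℝ)

theorem mac_form_iff_min_form
    (hpQ : IsPMF pQ) (hpX : ∀ k q, IsPMF (pX k q)) (hW : ∀ x, IsPMF (W x))
    (R : Fin K → ℝ) (D1 : Finset (Fin K)) :
    (∃ S : Finset (Fin K), D1 ⊆ S ∧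
        ∀ T ⊆ S, ∑ k ∈ T, R k ≤
          condMutInfo (SjointP pQ pX W)
            (fun z => fun k : {k // k ∈ T} => z.2.1 k.1)
            (fun z => z.2.2)
            (fun z => ((fun k : {k // k ∈ S \ T} => z.2.1 k.1), z.1))) ↔
      (∀ V : Finset (Fin K), (V ∩ D1).Nonempty →
        ∃ V' ⊆ V, V' ∩ D1 = V ∩ D1 ∧
          ∑ k ∈ V', R k ≤
            condMutInfo (SjointP pQ pX W)
              (fun z => fun k : {k // k ∈ V'} => z.2.1 k.1)
              (fun z => z.2.2)
              (fun z => ((fun k : {k // k ∈ Vᶜ} => z.2.1 k.1), z.1))) := by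
  set g : Finset (Fin K) → ℝ := fun B => condEnt (SjointP pQ pX W) (fun z => z.2.2)
    (fun z => ((fun k : {k // k ∈ B} => z.2.1 k.1), z.1))
  have hI : ∀ T A, condMutInfo (SjointP pQ pX W) (fun z => fun k : {k // k ∈ T} => z.2.1 k.1)
      (fun z => z.2.2) (fun z => ((fun k : {k // k ∈ A} => z.2.1 k.1), z.1))
      = g A - g (T ∪ A) :=
    condMutInfo_restrict_eq _
  simp +contextual only [hI, Finset.union_sdiff_of_subset]
  exact ⟨minForm_of_macForm (condEnt_SjointP_submodular pQ pX W hpQ hpX hW), macForm_of_minForm⟩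

end SingleLetter
end
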